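/- arXiv:2506.08217 — 4 statements merged into one kernel-verified Lean document; each statement's English description precedes it below -/
import Mathlib

section
/- Let X and Y be Polish spaces, γ an ordinal with ω ≤ γ < ω₁, and f : X → Y a function such that the preimage of every open set is Σ⁰_γ. Then for every ordinal β < ω₁ and every B ⊆ Y in the Borel class Σ⁰_{1+β}, the preimage f⁻¹(B) belongs to Σ⁰_{γ+β}. -/
open Ordinal

/-- The additive Borel hierarchy on a topological space: `SigmaO X ξ s` says that `s` is
`Σ⁰_ξ`. Every open set is `Σ⁰_ξ` for every `ξ ≥ 1`, and for `ξ ≥ 1` a countable union of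
sets, each of which is `Π⁰_η` (i.e. has `Σ⁰_η` complement) for some `η < ξ`, is `Σ⁰_ξ`. -/
inductive SigmaO (X : Type*) [TopologicalSpace X] : Ordinal.{0} → Set X → Prop where
  | of_isOpen {ξ : Ordinal} (s : Set X) (hs : IsOpen s) (hξ : 1 ≤ ξ) : SigmaO X ξ s
  | iUnion {ξ : Ordinal} (s : ℕ → Set X) (η : ℕ → Ordinal)
      (hη : ∀ n, η n < ξ) (h : ∀ n, SigmaO X (η n) (s n)ᶜ) : SigmaO X ξ (⋃ n, s n)

lemma SigmaO.one_le {X : Type*} [TopologicalSpace X] {ξ : Ordinal} {s : Set X}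
    (h : SigmaO X ξ s) : 1 ≤ ξ := by
  cases h with
  | of_isOpen s hs hξ => exact hξ
  | iUnion s η hη h =>
      exact Order.one_le_iff_pos.2 ((zero_le (a := η 0)).trans_lt (hη 0))

lemma SigmaO.mono {X : Type*} [TopologicalSpace X] {ξ ξ' : Ordinal} {s : Set X}
    (h : SigmaO X ξ s) (hle : ξ ≤ ξ') : SigmaO X ξ' s := by
  induction h with
  | of_isOpen s hs hξ => exact .of_isOpen s hs (hξ.trans hle)
  | iUnion s η hη h ih => exact .iUnion s η (fun n => (hη n).trans_le hle) h

/-- Let `X`, `Y` be Polish spaces, `ω ≤ γ < ω₁`, and `f : X → Y` a function such that the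
preimage of every open set is `Σ⁰_γ`. Then for every `β < ω₁` and every `B ⊆ Y` in
`Σ⁰_{1+β}`, the preimage `f ⁻¹' B` is `Σ⁰_{γ+β}`. -/
theorem preimage_sigmaO_add
    {X Y : Type} [TopologicalSpace X] [PolishSpace X] [TopologicalSpace Y] [PolishSpace Y]
    (γ : Ordinal) (hγω : Ordinal.omega0 ≤ γ) (hγc : γ.card ≤ Cardinal.aleph0)
    (f : X → Y) (hf : ∀ U : Set Y, IsOpen U → SigmaO X γ (f ⁻¹' U)) :
    ∀ β : Ordinal, β.card ≤ Cardinal.aleph0 →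
      ∀ B : Set Y, SigmaO Y (1 + β) B → SigmaO X (γ + β) (f ⁻¹' B) := by
  intro β
  induction β using Ordinal.induction with
  | _ β IH =>
    intro hβc B hB
    cases hB with
    | of_isOpen B hBopen hξ =>
        exact (hf B hBopen).mono (le_self_add (a := γ) (b := β))
    | iUnion s η hη h =>
        rw [Set.preimage_iUnion]
        refine SigmaO.iUnion _ (fun n => γ + (η n - 1)) (fun n => ?_) (fun n => ?_)
        · have h1 : (1 : Ordinal) ≤ η n := (h n).one_le
          have : η n - 1 < β := by
            have := Ordinal.add_sub_cancel_of_le h1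
            have hlt : 1 + (η n - 1) < 1 + β := by rw [this]; exact hη n
            exact (add_lt_add_iff_left 1).1 hlt
          exact (add_lt_add_iff_left γ).2 this
        · have h1 : (1 : Ordinal) ≤ η n := (h n).one_le
          have hlt : η n - 1 < β := by
            have := Ordinal.add_sub_cancel_of_le h1
            have hlt : 1 + (η n - 1) < 1 + β := by rw [this]; exact hη n
            exact (add_lt_add_iff_left 1).1 hlt
          have := IH (η n - 1) hlt ((Ordinal.card_le_card hlt.le).trans hβc) (s n)ᶜ
            (by rw [Ordinal.add_sub_cancel_of_le h1]; exact h n)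
          rwa [Set.preimage_compl] at this
end

section
/- With tree-formulas, ranks, and represented sets Q_φ as defined recursively (atomic formulas σ ∈ X with Q = {T : T(σ)=1} and rank 1; negation with rank +1; countable conjunction with rank sup(rnk(φ_n)+1) and Q the intersection): for every countable ordinal ξ ≥ 1, every Π⁰_ξ subset of 2^{(ω^{<ω})} is represented by a tree-formula of rank 3 + 2ξ, and every Σ⁰_ξ subset is represented by a tree-formula of rank 3 + 2ξ + 1. -/
/-- Tree-formulas: atomic formulas `σ ∈ X` for `σ ∈ ω^{<ω}`, closed under negation and
countable conjunction. -/
inductive TreeFormula : Type where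
  | atom : List ℕ → TreeFormula
  | neg : TreeFormula → TreeFormula
  | conj : (ℕ → TreeFormula) → TreeFormula

/-- The set `Q_φ ⊆ 2^{(ω^{<ω})}` represented by a tree-formula `φ`. -/
def TreeFormula.Q : TreeFormula → Set (List ℕ → Bool)
  | .atom σ => {T | T σ = true}
  | .neg ψ => (ψ.Q)ᶜ
  | .conj ψ => ⋂ n : ℕ, (ψ n).Q

/-- The rank of a tree-formula: atomic formulas have rank `1`, `rnk(¬ψ) = rnk(ψ) + 1`,
and `rnk(⋀ₙ φₙ) = supₙ (rnk(φₙ) + 1)`. -/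
noncomputable def TreeFormula.rank : TreeFormula → Ordinal.{0}
  | .atom _ => 1
  | .neg ψ => ψ.rank + 1
  | .conj ψ => ⨆ n : ℕ, ((ψ n).rank + 1)

open Ordinal Cardinal

namespace TFAux

lemma rank_atom (σ : List ℕ) : (TreeFormula.atom σ).rank = 1 := rfl
lemma rank_neg (ψ : TreeFormula) : ψ.neg.rank = ψ.rank + 1 := rfl
lemma rank_conj (ψ : ℕ → TreeFormula) : (TreeFormula.conj ψ).rank = ⨆ n, ((ψ n).rank + 1) := rfl
lemma Q_atom (σ : List ℕ) : (TreeFormula.atom σ).Q = {T | T σ = true} := rfl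
lemma Q_neg (ψ : TreeFormula) : ψ.neg.Q = (ψ.Q)ᶜ := rfl
lemma Q_conj (ψ : ℕ → TreeFormula) : (TreeFormula.conj ψ).Q = ⋂ n, (ψ n).Q := rfl

lemma iSup_eq_of (f : ℕ → Ordinal.{0}) (b : Ordinal) (h1 : ∀ n, f n ≤ b) (n : ℕ)
    (h2 : f n = b) : ⨆ n, f n = b :=
  le_antisymm (ciSup_le' h1) (h2 ▸ le_ciSup (Ordinal.bddAbove_range f) n)

/-- empty set at rank 3 -/
def empty3 : TreeFormula := .conj fun n => if n = 0 then .atom [] else .neg (.atom [])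

lemma empty3_rank : empty3.rank = 3 := by
  rw [empty3, rank_conj]
  apply iSup_eq_of _ _ ?_ 1
  · rw [if_neg one_ne_zero, rank_neg, rank_atom]; norm_num
  · intro n
    rcases n with _ | n
    · rw [if_pos rfl, rank_atom]
      exact_mod_cast (by norm_num : (1+1:ℕ) ≤ 3)
    · rw [if_neg n.succ_ne_zero, rank_neg, rank_atom]
      exact_mod_cast (by norm_num : (1+1+1:ℕ) ≤ 3)

lemma empty3_Q : empty3.Q = ∅ := by
  ext T
  simp only [empty3, Q_conj, Set.mem_iInter, Set.mem_empty_iff_false, iff_false, not_forall]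
  by_cases h : T [] = true
  · exact ⟨1, by simp [Q_neg, Q_atom, h]⟩
  · exact ⟨0, by simp [Q_atom, h]⟩

/-- empty set at rank 4 -/
def empty4 : TreeFormula :=
  .conj fun n => if n = 0 then .atom [] else if n = 1 then .neg (.atom [])
    else .neg (.neg (.atom []))

lemma empty4_rank : empty4.rank = 4 := by
  rw [empty4, rank_conj]
  apply iSup_eq_of _ _ ?_ 2
  · rw [if_neg (by omega : (2:ℕ) ≠ 0), if_neg (by omega : (2:ℕ) ≠ 1), rank_neg, rank_neg,
      rank_atom]
    norm_num
  · intro n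
    rcases n with _ | _ | n
    · rw [if_pos rfl, rank_atom]
      exact_mod_cast (by norm_num : (1+1:ℕ) ≤ 4)
    · rw [if_neg (by omega : (0:ℕ)+1 ≠ 0), if_pos rfl, rank_neg, rank_atom]
      exact_mod_cast (by norm_num : (1+1+1:ℕ) ≤ 4)
    · have h2 : n + 1 + 1 ≠ 0 := by omega
      have h1 : n + 1 + 1 ≠ 1 := by omega
      rw [if_neg h2, if_neg h1, rank_neg, rank_neg, rank_atom]
      exact_mod_cast (by norm_num : (1+1+1+1:ℕ) ≤ 4)

lemma empty4_Q : empty4.Q = ∅ := by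
  ext T
  simp only [empty4, Q_conj, Set.mem_iInter, Set.mem_empty_iff_false, iff_false, not_forall]
  by_cases h : T [] = true
  · exact ⟨1, by simp [Q_neg, Q_atom, h]⟩
  · exact ⟨0, by simp [Q_atom, h]⟩

lemma enum_lemma (o : Ordinal.{0}) (h1 : o ≠ 0) (hc : o.card ≤ ℵ₀) :
    ∃ e : ℕ → Ordinal, (∀ n, e n < o) ∧ (⨆ n, e n + 1) = o := by
  have hcount : Countable o.ToType := by
    rw [← Cardinal.mk_le_aleph0_iff, Cardinal.mk_toType]; exact hc
  have hne : Nonempty o.ToType := Ordinal.nonempty_toType_iff.mpr h1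
  obtain ⟨f, hf⟩ := exists_surjective_nat o.ToType
  set g : o.ToType → Ordinal := fun x => ((Ordinal.ToType.mk (o := o)).symm x : Ordinal)
  refine ⟨fun n => g (f n), fun n => ((Ordinal.ToType.mk (o := o)).symm (f n)).2, ?_⟩
  apply le_antisymm
  · exact ciSup_le' fun n => Order.add_one_le_iff.mpr ((Ordinal.ToType.mk (o := o)).symm (f n)).2
  · apply le_of_forall_lt
    intro b hb
    obtain ⟨n, hn⟩ := hf (Ordinal.ToType.mk (o := o) ⟨b, hb⟩)
    have hgb : g (f n) = b := by rw [hn]; simp [g]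
    calc b < g (f n) + 1 := by rw [hgb]; exact lt_add_one b
    _ ≤ _ := le_ciSup (Ordinal.bddAbove_range _) n

lemma univ_empty : ∀ α : Ordinal.{0}, 4 ≤ α → α.card ≤ ℵ₀ →
    (∃ φ : TreeFormula, φ.rank = α ∧ φ.Q = Set.univ) ∧
    (∃ φ : TreeFormula, φ.rank = α ∧ φ.Q = ∅) := by
  intro α
  induction α using Ordinal.induction with
  | h α IH =>
  intro h4 hc
  rcases Ordinal.zero_or_succ_or_isSuccLimit α with h0 | ⟨β, hβ⟩ | hlim
  · exfalso; rw [h0] at h4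
    exact absurd (lt_of_lt_of_le (by exact_mod_cast (by norm_num : (0:ℕ) < 4)) h4)
      (lt_irrefl 0)
  · rw [← Ordinal.add_one_eq_succ] at hβ
    subst hβ
    by_cases hβ4 : 4 ≤ β
    · have hβc : β.card ≤ ℵ₀ :=
        le_trans (Ordinal.card_le_card (le_of_lt (lt_add_one β))) hc
      obtain ⟨⟨u, hu_rank, hu_Q⟩, ⟨z, hz_rank, hz_Q⟩⟩ := IH β (lt_add_one β) hβ4 hβc
      constructor
      · exact ⟨.neg z, by rw [rank_neg, hz_rank], by rw [Q_neg, hz_Q, Set.compl_empty]⟩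
      · exact ⟨.neg u, by rw [rank_neg, hu_rank], by rw [Q_neg, hu_Q, Set.compl_univ]⟩
    · have hβ3 : β = 3 := by
        apply le_antisymm
        · have : β < 4 := lt_of_not_ge hβ4
          rwa [show (4:Ordinal) = 3 + 1 by norm_num, Order.lt_add_one_iff] at this
        · have : (3:Ordinal) + 1 ≤ β + 1 := by rwa [show (3:Ordinal)+1 = 4 by norm_num]
          rwa [Ordinal.add_one_eq_succ, Ordinal.add_one_eq_succ, Order.succ_le_succ_iff] at this
      subst hβ3
      have h34 : (3:Ordinal) + 1 = 4 := by norm_num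
      constructor
      · exact ⟨.neg empty3, by rw [rank_neg, empty3_rank, h34],
          by rw [Q_neg, empty3_Q, Set.compl_empty]⟩
      · exact ⟨empty4, by rw [empty4_rank, h34], empty4_Q⟩
  · -- limit case
    have hω : (Ordinal.omega0) ≤ α := Ordinal.omega0_le_of_isSuccLimit hlim
    have h4α : (4:Ordinal) < α :=
      lt_of_lt_of_le (by exact_mod_cast Ordinal.nat_lt_omega0 4) hω
    obtain ⟨e, he_lt, he_sup⟩ := enum_lemma α hlim.pos.ne' hc
    have hmax_lt : ∀ n, max (e n) 4 < α := fun n => max_lt (he_lt n) h4α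
    have hmaxc : ∀ n, (max (e n) 4).card ≤ ℵ₀ := fun n =>
      le_trans (Ordinal.card_le_card (le_of_lt (hmax_lt n))) hc
    choose u hu_rank hu_Q using fun n =>
      (IH (max (e n) 4) (hmax_lt n) (le_max_right _ _) (hmaxc n)).1
    have hsup_max : (⨆ n, ((u n).rank + 1)) = α := by
      apply le_antisymm
      · exact ciSup_le' fun n => by
          rw [hu_rank]; exact Order.add_one_le_iff.mpr (hmax_lt n)
      · rw [← he_sup]
        apply ciSup_le'; intro n
        calc e n + 1 ≤ max (e n) 4 + 1 := add_le_add_left (le_max_left _ _) 1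
        _ = (u n).rank + 1 := by rw [hu_rank]
        _ ≤ _ := le_ciSup (Ordinal.bddAbove_range _) n
    constructor
    · refine ⟨.conj u, ?_, ?_⟩
      · rw [rank_conj]; exact hsup_max
      · rw [Q_conj]; simp [hu_Q]
    · refine ⟨.conj (fun n => Nat.casesOn n empty4 u), ?_, ?_⟩
      · rw [rank_conj]
        apply le_antisymm
        · apply ciSup_le'; rintro (_ | n)
          · show empty4.rank + 1 ≤ α
            rw [empty4_rank]
            refine le_trans ?_ hω
            exact_mod_cast (Ordinal.nat_lt_omega0 5).le
          · show (u n).rank + 1 ≤ α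
            rw [hu_rank]; exact Order.add_one_le_iff.mpr (hmax_lt n)
        · rw [← hsup_max]
          apply ciSup_le'; intro n
          exact le_ciSup (Ordinal.bddAbove_range
            (fun k => ((Nat.casesOn k empty4 u : TreeFormula).rank + 1))) (n+1)
      · rw [Q_conj]
        apply Set.eq_empty_iff_forall_notMem.mpr
        intro T hT
        have h0 := Set.mem_iInter.mp hT 0
        rw [show (Nat.casesOn 0 empty4 u : TreeFormula) = empty4 from rfl, empty4_Q] at h0
        exact h0

lemma pad (Q : Set (List ℕ → Bool)) (β : Ordinal) (φ : TreeFormula)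
    (hQ : φ.Q = Q) (hr : φ.rank ≤ β) (h5 : (5:Ordinal) ≤ β) (hc : β.card ≤ ℵ₀) :
    ∃ ψ : TreeFormula, ψ.rank = β ∧ ψ.Q = Q := by
  rcases eq_or_lt_of_le hr with he | hlt
  · exact ⟨φ, he, hQ⟩
  have h4β : (4:Ordinal) < β :=
    lt_of_lt_of_le (by exact_mod_cast (by norm_num : (4:ℕ) < 5)) h5
  have hβ0 : β ≠ 0 := fun h => by simp [h] at h4β
  obtain ⟨e, he_lt, he_sup⟩ := enum_lemma β hβ0 hc
  have hmax_lt : ∀ n, max (e n) 4 < β := fun n => max_lt (he_lt n) h4β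
  choose u hu_rank hu_Q using fun n =>
    (univ_empty (max (e n) 4) (le_max_right _ _)
      (le_trans (Ordinal.card_le_card (le_of_lt (hmax_lt n))) hc)).1
  refine ⟨.conj (fun n => Nat.casesOn n φ u), ?_, ?_⟩
  · rw [rank_conj]
    apply le_antisymm
    · apply ciSup_le'; rintro (_ | n)
      · exact Order.add_one_le_iff.mpr hlt
      · show (u n).rank + 1 ≤ β
        rw [hu_rank]; exact Order.add_one_le_iff.mpr (hmax_lt n)
    · rw [← he_sup]
      apply ciSup_le'; intro n
      calc e n + 1 ≤ max (e n) 4 + 1 := add_le_add_left (le_max_left _ _) 1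
      _ = (u n).rank + 1 := by rw [hu_rank]
      _ ≤ _ := le_ciSup (Ordinal.bddAbove_range
          (fun k => ((Nat.casesOn k φ u : TreeFormula).rank + 1))) (n+1)
  · rw [Q_conj]
    ext T
    rw [Set.mem_iInter]
    constructor
    · intro h; have := h 0; rwa [show (Nat.casesOn 0 φ u : TreeFormula) = φ from rfl, hQ] at this
    · intro hT n
      rcases n with _ | n
      · show T ∈ φ.Q; rw [hQ]; exact hT
      · show T ∈ (u n).Q; rw [hu_Q]; trivial

/-- the cylinder determined by a finite list of constraints -/
def Cyl (p : List (List ℕ × Bool)) : Set (List ℕ → Bool) := {T | ∀ q ∈ p, T q.1 = q.2}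

/-- literal formula for a single constraint -/
def lit (q : List ℕ × Bool) : TreeFormula :=
  if q.2 then .atom q.1 else .neg (.atom q.1)

lemma lit_rank (q : List ℕ × Bool) : (lit q).rank ≤ 2 := by
  rcases q with ⟨σ, b⟩
  cases b
  · have h : lit (σ, false) = .neg (.atom σ) := by simp [lit]
    rw [h, rank_neg, rank_atom]
    exact le_of_eq (by norm_num)
  · have h : lit (σ, true) = .atom σ := by simp [lit]
    rw [h, rank_atom]
    exact_mod_cast (by norm_num : (1:ℕ) ≤ 2)

lemma lit_Q (q : List ℕ × Bool) : (lit q).Q = {T | T q.1 = q.2} := by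
  rcases q with ⟨σ, b⟩
  cases b
  · show (TreeFormula.neg (.atom σ)).Q = _
    rw [Q_neg, Q_atom]
    ext T; simp
  · show (TreeFormula.atom σ).Q = _
    rw [Q_atom]

/-- complement of a cylinder is representable with rank at most 4 -/
lemma cyl_compl_rep (p : List (List ℕ × Bool)) :
    ∃ φ : TreeFormula, φ.rank ≤ 4 ∧ φ.Q = (Cyl p)ᶜ := by
  by_cases hp : p = []
  · refine ⟨empty3, ?_, ?_⟩
    · rw [empty3_rank]; exact_mod_cast (by norm_num : (3:ℕ) ≤ 4)
    · rw [empty3_Q, hp]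
      have : Cyl [] = Set.univ := by ext T; simp [Cyl]
      rw [this, Set.compl_univ]
  · set d := p.head!
    refine ⟨.neg (.conj fun n => lit (p.getD n d)), ?_, ?_⟩
    · rw [rank_neg, rank_conj]
      have h3 : (⨆ n, ((lit (p.getD n d)).rank + 1)) ≤ 3 := by
        apply ciSup_le'; intro n
        calc (lit (p.getD n d)).rank + 1 ≤ 2 + 1 := add_le_add_left (lit_rank _) 1
        _ = 3 := by norm_num
      calc (⨆ n, ((lit (p.getD n d)).rank + 1)) + 1 ≤ 3 + 1 := add_le_add_left h3 1
      _ = 4 := by norm_num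
    · rw [Q_neg, Q_conj]
      apply congrArg
      ext T
      rw [Set.mem_iInter]
      constructor
      · intro h q hq
        obtain ⟨n, hn, he⟩ := List.mem_iff_getElem.mp hq
        have hth := h n
        rw [lit_Q] at hth
        rw [List.getD_eq_getElem p d hn, he] at hth
        exact hth
      · intro h n
        rw [lit_Q]
        by_cases hn : n < p.length
        · exact h _ (List.getD_eq_getElem p d hn ▸ List.getElem_mem hn)
        · rw [List.getD_eq_default p d (le_of_not_gt hn)]
          exact h _ (List.head!_mem_self hp)

/-- every closed set is representable with rank exactly 5 -/
lemma closed_rep (C : Set (List ℕ → Bool)) (hC : IsClosed C) :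
    ∃ φ : TreeFormula, φ.rank = 5 ∧ φ.Q = C := by
  classical
  obtain ⟨f, hf⟩ := exists_surjective_nat (List (List ℕ × Bool))
  obtain ⟨u4, hu4_rank, hu4_Q⟩ := (univ_empty 4 le_rfl
    (by simp)).1
  have hD : ∀ p : List (List ℕ × Bool), ∃ φ : TreeFormula, φ.rank ≤ 4 ∧
      ((Cyl p ⊆ Cᶜ → φ.Q = (Cyl p)ᶜ) ∧ (¬ (Cyl p ⊆ Cᶜ) → φ.Q = Set.univ)) := by
    intro p
    by_cases h : Cyl p ⊆ Cᶜ
    · obtain ⟨φ, h1, h2⟩ := cyl_compl_rep p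
      exact ⟨φ, h1, fun _ => h2, fun h' => absurd h h'⟩
    · exact ⟨u4, le_of_eq hu4_rank, fun h' => absurd h' h, fun _ => hu4_Q⟩
  choose D hD_rank hD_Q using hD
  refine ⟨.conj (fun n => Nat.casesOn n u4 (fun k => D (f k))), ?_, ?_⟩
  · rw [rank_conj]
    apply le_antisymm
    · apply ciSup_le'; rintro (_ | n)
      · show u4.rank + 1 ≤ 5
        rw [hu4_rank]; norm_num
      · show (D (f n)).rank + 1 ≤ 5
        calc (D (f n)).rank + 1 ≤ 4 + 1 := add_le_add_left (hD_rank _) 1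
        _ = 5 := by norm_num
    · have := le_ciSup (Ordinal.bddAbove_range
        (fun n => ((Nat.casesOn n u4 (fun k => D (f k)) : TreeFormula).rank + 1))) 0
      calc (5:Ordinal) = u4.rank + 1 := by rw [hu4_rank]; norm_num
      _ ≤ _ := this
  · rw [Q_conj]
    ext T
    rw [Set.mem_iInter]
    constructor
    · intro h
      by_contra hTC
      have hTopen : T ∈ Cᶜ := hTC
      obtain ⟨I, v, hv, hsub⟩ := isOpen_pi_iff.mp hC.isOpen_compl T hTopen
      set p : List (List ℕ × Bool) := I.toList.map (fun a => (a, T a)) with hp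
      have hCp : Cyl p ⊆ Cᶜ := by
        intro T' hT'
        apply hsub
        intro a ha
        have : T' a = T a := by
          apply hT' (a, T a)
          rw [hp]; simp only [List.mem_map]
          exact ⟨a, Finset.mem_toList.mpr ha, rfl⟩
        rw [this]
        exact (hv a ha).2
      obtain ⟨k, hk⟩ := hf p
      have hmem := h (k + 1)
      have : T ∈ (D (f k)).Q := hmem
      rw [hk, (hD_Q p).1 hCp] at this
      apply this
      intro q hq
      rw [hp] at hq
      simp only [List.mem_map] at hq
      obtain ⟨a, _, rfl⟩ := hq
      rfl
    · intro hT n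
      rcases n with _ | k
      · show T ∈ u4.Q; rw [hu4_Q]; trivial
      · show T ∈ (D (f k)).Q
        by_cases h : Cyl (f k) ⊆ Cᶜ
        · rw [(hD_Q (f k)).1 h]
          intro hTcyl
          exact (h hTcyl) hT
        · rw [(hD_Q (f k)).2 h]; trivial

lemma sigmaO_one_le {X : Type*} [TopologicalSpace X] {ζ : Ordinal} {s : Set X}
    (h : SigmaO X ζ s) : 1 ≤ ζ := by
  induction h with
  | of_isOpen s hs hξ => exact hξ
  | iUnion s η hη h IH => exact le_of_lt (lt_of_le_of_lt (IH 0) (hη 0))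

lemma card_32 {ξ : Ordinal} (hc : ξ.card ≤ ℵ₀) : (3 + 2*ξ).card ≤ ℵ₀ := by
  rw [Ordinal.card_add, Ordinal.card_mul]
  have h3 : (3:Ordinal).card = 3 := by simp
  have h2 : (2:Ordinal).card = 2 := by simp
  rw [h3, h2]
  apply Cardinal.add_le_aleph0.mpr
  constructor
  · exact_mod_cast (Cardinal.nat_lt_aleph0 3).le
  · calc (2:Cardinal) * ξ.card ≤ ℵ₀ * ℵ₀ :=
        mul_le_mul' (by exact_mod_cast (Cardinal.nat_lt_aleph0 2).le) hc
    _ = ℵ₀ := Cardinal.aleph0_mul_aleph0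

lemma five_le {ξ : Ordinal} (h1 : 1 ≤ ξ) : (5:Ordinal) ≤ 3 + 2*ξ := by
  calc (5:Ordinal) = 3 + 2*1 := by norm_num
  _ ≤ 3 + 2*ξ := add_le_add_right (mul_le_mul_right h1 2) 3

lemma main : ∀ ξ : Ordinal.{0}, 1 ≤ ξ → ξ.card ≤ ℵ₀ → ∀ Q : Set (List ℕ → Bool),
    SigmaO (List ℕ → Bool) ξ Q → ∃ φ : TreeFormula, φ.rank = 3 + 2*ξ ∧ φ.Q = Qᶜ := by
  intro ξ
  induction ξ using Ordinal.induction with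
  | h ξ IH =>
  intro h1 hc Q hQ
  cases hQ with
  | of_isOpen _hle hs =>
    obtain ⟨φ, hr, hφQ⟩ := closed_rep Qᶜ hs.isClosed_compl
    exact pad Qᶜ (3 + 2*ξ) φ hφQ (hr ▸ five_le h1) (five_le h1) (card_32 hc)
  | iUnion s η hη h =>
    have hη1 : ∀ n, 1 ≤ η n := fun n => sigmaO_one_le (h n)
    have hηc : ∀ n, (η n).card ≤ ℵ₀ := fun n =>
      le_trans (Ordinal.card_le_card (le_of_lt (hη n))) hc
    choose φ hφr hφQ using fun n => IH (η n) (hη n) (hη1 n) (hηc n) ((s n)ᶜ) (h n)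
    have key : (TreeFormula.conj fun n => .neg (φ n)).Q = (⋃ n, s n)ᶜ := by
      rw [Q_conj, Set.compl_iUnion]
      apply congrArg
      ext n T
      rw [Q_neg, hφQ n, compl_compl]
    have hrank : (TreeFormula.conj fun n => .neg (φ n)).rank ≤ 3 + 2*ξ := by
      rw [rank_conj]
      apply ciSup_le'
      intro n
      rw [rank_neg, hφr n]
      calc 3 + 2*(η n) + 1 + 1 = 3 + 2*(η n + 1) := by
            rw [mul_add_one, add_assoc (3 + 2*(η n)), add_assoc]; norm_num
      _ ≤ 3 + 2*ξ :=
            add_le_add_right (mul_le_mul_right (Order.add_one_le_iff.mpr (hη n)) 2) 3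
    exact pad _ (3 + 2*ξ) _ key hrank (five_le h1) (card_32 hc)

end TFAux

/-- For every countable ordinal `ξ ≥ 1`: every `Π⁰_ξ` subset of `2^{(ω^{<ω})}` is
represented by a tree-formula of rank `3 + 2·ξ`, and every `Σ⁰_ξ` subset is represented
by a tree-formula of rank `3 + 2·ξ + 1`. -/
theorem treeFormula_represents_borel_classes
    (ξ : Ordinal) (hξ1 : 1 ≤ ξ) (hξc : ξ.card ≤ Cardinal.aleph0) :
    (∀ Q : Set (List ℕ → Bool), SigmaO (List ℕ → Bool) ξ Qᶜ →
      ∃ φ : TreeFormula, φ.rank = 3 + 2 * ξ ∧ φ.Q = Q) ∧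
    (∀ Q : Set (List ℕ → Bool), SigmaO (List ℕ → Bool) ξ Q →
      ∃ φ : TreeFormula, φ.rank = 3 + 2 * ξ + 1 ∧ φ.Q = Q) := by
  constructor
  · intro Q h
    obtain ⟨φ, h1, h2⟩ := TFAux.main ξ hξ1 hξc Qᶜ h
    exact ⟨φ, h1, by rwa [compl_compl] at h2⟩
  · intro Q h
    obtain ⟨φ, h1, h2⟩ := TFAux.main ξ hξ1 hξc Q h
    exact ⟨.neg φ, by rw [TFAux.rank_neg, h1], by rw [TFAux.Q_neg, h2, compl_compl]⟩
end

section
/- Let E and F be analytic equivalence relations on standard Borel spaces. Then E is classwise Borel isomorphic to F if and only if E is classwise Borel embeddable into F and F is classwise Borel embeddable into E. -/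
/-- `f` is a Borel reduction of `E` to `F`. -/
def IsBorelReduction {X Y : Type*} [MeasurableSpace X] [MeasurableSpace Y]
    (f : X → Y) (E : X → X → Prop) (F : Y → Y → Prop) : Prop :=
  Measurable f ∧ ∀ x x', E x x' ↔ F (f x) (f x')

/-- `E` is classwise Borel isomorphic to `F`: there are Borel reductions in both
directions whose factorings to the quotients are mutually inverse bijections. -/
def ClasswiseBorelIso {X Y : Type*} [MeasurableSpace X] [MeasurableSpace Y]
    (E : X → X → Prop) (F : Y → Y → Prop) : Prop :=
  ∃ (f : X → Y) (g : Y → X), IsBorelReduction f E F ∧ IsBorelReduction g F E ∧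
    (∀ x, E (g (f x)) x) ∧ (∀ y, F (f (g y)) y)

/-- `E` is classwise Borel embeddable into `F`: there is a Borel `F`-invariant set `A`
such that `E` is classwise Borel isomorphic to the restriction of `F` to `A`. -/
def ClasswiseBorelEmb {X Y : Type*} [MeasurableSpace X] [MeasurableSpace Y]
    (E : X → X → Prop) (F : Y → Y → Prop) : Prop :=
  ∃ A : Set Y, MeasurableSet A ∧ (∀ y y', F y y' → y ∈ A → y' ∈ A) ∧
    ClasswiseBorelIso E (fun a b : A => F a b)

/-- **Cantor–Schröder–Bernstein for classwise Borel embeddability.** For analytic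
equivalence relations `E`, `F` on standard Borel (here: Polish) spaces,
`E ≃_cB F` iff `E ⊑_cB F` and `F ⊑_cB E`. -/
theorem classwiseBorelIso_iff_biEmbeddable
    {X Y : Type} [TopologicalSpace X] [PolishSpace X] [MeasurableSpace X] [BorelSpace X]
    [TopologicalSpace Y] [PolishSpace Y] [MeasurableSpace Y] [BorelSpace Y]
    (E : X → X → Prop) (F : Y → Y → Prop)
    (hE : Equivalence E) (hF : Equivalence F)
    (hEan : MeasureTheory.AnalyticSet {p : X × X | E p.1 p.2})
    (hFan : MeasureTheory.AnalyticSet {p : Y × Y | F p.1 p.2}) :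
    ClasswiseBorelIso E F ↔ ClasswiseBorelEmb E F ∧ ClasswiseBorelEmb F E := by
  classical
  constructor
  · rintro ⟨f, g, ⟨hfm, hfr⟩, ⟨hgm, hgr⟩, hgf, hfg⟩
    constructor
    · exact ⟨Set.univ, MeasurableSet.univ, fun _ _ _ _ => trivial,
        fun x => ⟨f x, trivial⟩, fun a => g a,
        ⟨hfm.subtype_mk, fun x x' => hfr x x'⟩,
        ⟨hgm.comp measurable_subtype_coe, fun a a' => hgr a a'⟩,
        hgf, fun y => hfg y⟩
    · exact ⟨Set.univ, MeasurableSet.univ, fun _ _ _ _ => trivial,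
        fun y => ⟨g y, trivial⟩, fun b => f b,
        ⟨hgm.subtype_mk, fun y y' => hgr y y'⟩,
        ⟨hfm.comp measurable_subtype_coe, fun b b' => hfr b b'⟩,
        hfg, fun x => hgf x⟩
  · rintro ⟨⟨A, hAm, hAinv, f, g, ⟨hfm, hfr⟩, ⟨hgm, hgr⟩, hgf, hfg⟩,
      ⟨B, hBm, hBinv, u, v, ⟨hum, hur⟩, ⟨hvm, hvr⟩, hvu, huv⟩⟩
    -- total extensions of v : ↥B → Y and g : ↥A → X
    set vt : X → Y := fun x => if hx : x ∈ B then v ⟨x, hx⟩ else ↑(f x) with hvt_def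
    set gt : Y → X := fun y => if hy : y ∈ A then g ⟨y, hy⟩ else ↑(u y) with hgt_def
    have hvt_eq : ∀ (x : X) (hx : x ∈ B), vt x = v ⟨x, hx⟩ := fun x hx => dif_pos hx
    have hgt_eq : ∀ (y : Y) (hy : y ∈ A), gt y = g ⟨y, hy⟩ := fun y hy => dif_pos hy
    have hvtm : Measurable vt := by
      exact Measurable.dite hvm ((measurable_subtype_coe.comp hfm).comp measurable_subtype_coe) hBm
    have hgtm : Measurable gt := by
      exact Measurable.dite hgm ((measurable_subtype_coe.comp hum).comp measurable_subtype_coe) hAm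
    set w : X → X := fun x => gt (vt x) with hw_def
    have hwm : Measurable w := hgtm.comp hvtm
    -- the Schröder–Bernstein iterates
    set P : ℕ → Set X := fun n => Nat.rec Bᶜ (fun _ Pn => B ∩ vt ⁻¹' A ∩ w ⁻¹' Pn) n with hP_def
    have hP0 : P 0 = Bᶜ := rfl
    have hPs : ∀ n, P (n + 1) = B ∩ vt ⁻¹' A ∩ w ⁻¹' (P n) := fun n => rfl
    have hPm : ∀ n, MeasurableSet (P n) := by
      intro n
      induction n with
      | zero => exact hBm.compl
      | succ n ih => exact ((hBm.inter (hvtm hAm)).inter (hwm ih))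
    set S : Set X := ⋃ n, P n with hS_def
    have hSm : MeasurableSet S := MeasurableSet.iUnion hPm
    set T : Set Y := A ∩ gt ⁻¹' S with hT_def
    -- invariance
    have hBinv' : ∀ x x', E x x' → (x ∈ B ↔ x' ∈ B) :=
      fun x x' h => ⟨hBinv x x' h, hBinv x' x (hE.symm h)⟩
    have hAinv' : ∀ y y', F y y' → (y ∈ A ↔ y' ∈ A) :=
      fun y y' h => ⟨hAinv y y' h, hAinv y' y (hF.symm h)⟩
    have hvtF : ∀ x x', x ∈ B → x' ∈ B → E x x' → F (vt x) (vt x') := by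
      intro x x' hx hx' h
      rw [hvt_eq x hx, hvt_eq x' hx']
      exact (hvr ⟨x, hx⟩ ⟨x', hx'⟩).mp h
    have hgtE : ∀ y y', y ∈ A → y' ∈ A → F y y' → E (gt y) (gt y') := by
      intro y y' hy hy' h
      rw [hgt_eq y hy, hgt_eq y' hy']
      exact (hgr ⟨y, hy⟩ ⟨y', hy'⟩).mp h
    have hPinv : ∀ n x x', E x x' → x ∈ P n → x' ∈ P n := by
      intro n
      induction n with
      | zero =>
        intro x x' h hx hx'
        exact hx (hBinv x' x (hE.symm h) hx')
      | succ n ih =>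
        intro x x' h hx
        rw [hPs n] at hx ⊢
        obtain ⟨⟨hxB, hxA⟩, hxw⟩ := hx
        have hx'B : x' ∈ B := hBinv x x' h hxB
        have hFvt : F (vt x) (vt x') := hvtF x x' hxB hx'B h
        have hx'A : vt x' ∈ A := hAinv _ _ hFvt hxA
        exact ⟨⟨hx'B, hx'A⟩, ih _ _ (hgtE _ _ hxA hx'A hFvt) hxw⟩
    have hSinv : ∀ x x', E x x' → x ∈ S → x' ∈ S := by
      intro x x' h hx
      obtain ⟨n, hn⟩ := Set.mem_iUnion.mp hx
      exact Set.mem_iUnion.mpr ⟨n, hPinv n x x' h hn⟩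
    have hTinv : ∀ y y', F y y' → y ∈ T → y' ∈ T := by
      rintro y y' h ⟨hyA, hyS⟩
      have hy'A : y' ∈ A := hAinv y y' h hyA
      exact ⟨hy'A, hSinv _ _ (hgtE y y' hyA hy'A h) hyS⟩
    -- basic membership facts
    have hScB : ∀ x, x ∉ S → x ∈ B := by
      intro x hx
      by_contra hxB
      exact hx (Set.mem_iUnion.mpr ⟨0, hxB⟩)
    have hu_mem : ∀ y : Y, (↑(u y) : X) ∈ S → y ∈ T := by
      intro y hy
      obtain ⟨n, hn⟩ := Set.mem_iUnion.mp hy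
      cases n with
      | zero => exact absurd (u y).2 hn
      | succ n =>
        rw [hPs n] at hn
        obtain ⟨⟨-, hA1⟩, hw1⟩ := hn
        have hvteq : vt ↑(u y) = v (u y) := hvt_eq _ (u y).2
        rw [Set.mem_preimage, hvteq] at hA1
        have hFy : F (v (u y)) y := hvu y
        have hyA : y ∈ A := hAinv _ _ hFy hA1
        refine ⟨hyA, Set.mem_iUnion.mpr ⟨n, ?_⟩⟩
        have : E (w ↑(u y)) (gt y) := by
          simp only [hw_def, hvteq]
          exact hgtE _ _ hA1 hyA hFy
        exact hPinv n _ _ this hw1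
    have hvt_mem : ∀ x, x ∈ B → vt x ∈ T → x ∈ S := by
      rintro x hxB ⟨hA1, hS1⟩
      obtain ⟨n, hn⟩ := Set.mem_iUnion.mp hS1
      exact Set.mem_iUnion.mpr ⟨n + 1, (hPs n) ▸ ⟨⟨hxB, hA1⟩, hn⟩⟩
    have hf_mem : ∀ x, x ∈ S → (↑(f x) : Y) ∈ T := by
      intro x hx
      refine ⟨(f x).2, ?_⟩
      have : gt ↑(f x) = g (f x) := hgt_eq _ (f x).2
      rw [Set.mem_preimage, this]
      exact hSinv x _ (hE.symm (hgf x)) hx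
    -- the two pieces glued
    set h : X → Y := S.piecewise (fun x => ↑(f x)) vt with hh_def
    set h' : Y → X := T.piecewise gt (fun y => ↑(u y)) with hh'_def
    have hhm : Measurable h :=
      Measurable.piecewise hSm (measurable_subtype_coe.comp hfm) hvtm
    have hh'm : Measurable h' :=
      Measurable.piecewise (hAm.inter (hgtm hSm)) hgtm (measurable_subtype_coe.comp hum)
    have hh_in : ∀ x, x ∈ S → h x = ↑(f x) := fun x hx => Set.piecewise_eq_of_mem _ _ _ hx
    have hh_out : ∀ x, x ∉ S → h x = vt x := fun x hx => Set.piecewise_eq_of_notMem _ _ _ hx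
    have hh'_in : ∀ y, y ∈ T → h' y = gt y := fun y hy => Set.piecewise_eq_of_mem _ _ _ hy
    have hh'_out : ∀ y, y ∉ T → h' y = ↑(u y) := fun y hy => Set.piecewise_eq_of_notMem _ _ _ hy
    -- mixed-case key lemmas
    have hkey : ∀ x x', x ∈ S → x' ∉ S → ¬ E x x' ∧ ¬ F (↑(f x)) (vt x') := by
      intro x x' hx hx'
      refine ⟨fun h => hx' (hSinv x x' h hx), fun hFf => ?_⟩
      have hx'B : x' ∈ B := hScB x' hx'
      have hvx'A : vt x' ∈ A := hAinv _ _ hFf (f x).2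
      have h1 : E (gt ↑(f x)) (gt (vt x')) := hgtE _ _ (f x).2 hvx'A hFf
      rw [hgt_eq _ (f x).2] at h1
      have h2 : E x (w x') := hE.trans (hE.symm (hgf x)) h1
      exact hx' (hvt_mem x' hx'B ⟨hvx'A, hSinv _ _ h2 hx⟩)
    have hkey' : ∀ y y', y ∈ T → y' ∉ T → ¬ F y y' ∧ ¬ E (gt y) (↑(u y')) := by
      intro y y' hy hy'
      refine ⟨fun h => hy' (hTinv y y' h hy), fun hEe => ?_⟩
      exact hy' (hu_mem y' (hSinv _ _ hEe hy.2))
    refine ⟨h, h', ⟨hhm, ?_⟩, ⟨hh'm, ?_⟩, ?_, ?_⟩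
    · -- h is a reduction of E to F
      intro x x'
      by_cases hx : x ∈ S <;> by_cases hx' : x' ∈ S
      · rw [hh_in x hx, hh_in x' hx']
        exact hfr x x'
      · rw [hh_in x hx, hh_out x' hx']
        exact ⟨fun h => absurd h (hkey x x' hx hx').1,
          fun h => absurd h (hkey x x' hx hx').2⟩
      · rw [hh_out x hx, hh_in x' hx']
        constructor
        · intro h; exact absurd (hE.symm h) (hkey x' x hx' hx).1
        · intro h; exact absurd (hF.symm h) (hkey x' x hx' hx).2
      · rw [hh_out x hx, hh_out x' hx']
        have hxB := hScB x hx
        have hx'B := hScB x' hx'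
        rw [hvt_eq x hxB, hvt_eq x' hx'B]
        exact hvr ⟨x, hxB⟩ ⟨x', hx'B⟩
    · -- h' is a reduction of F to E
      intro y y'
      by_cases hy : y ∈ T <;> by_cases hy' : y' ∈ T
      · rw [hh'_in y hy, hh'_in y' hy']
        rw [hgt_eq y hy.1, hgt_eq y' hy'.1]
        exact hgr ⟨y, hy.1⟩ ⟨y', hy'.1⟩
      · rw [hh'_in y hy, hh'_out y' hy']
        exact ⟨fun h => absurd h (hkey' y y' hy hy').1,
          fun h => absurd h (hkey' y y' hy hy').2⟩
      · rw [hh'_out y hy, hh'_in y' hy']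
        constructor
        · intro h; exact absurd (hF.symm h) (hkey' y' y hy' hy).1
        · intro h; exact absurd (hE.symm h) (hkey' y' y hy' hy).2
      · rw [hh'_out y hy, hh'_out y' hy']
        exact hur y y'
    · -- h' ∘ h is E-identity
      intro x
      by_cases hx : x ∈ S
      · rw [hh_in x hx, hh'_in _ (hf_mem x hx), hgt_eq _ (f x).2]
        exact hgf x
      · have hxB := hScB x hx
        have hvT : vt x ∉ T := fun hc => hx (hvt_mem x hxB hc)
        rw [hh_out x hx, hh'_out _ hvT, hvt_eq x hxB]
        exact huv ⟨x, hxB⟩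
    · -- h ∘ h' is F-identity
      intro y
      by_cases hy : y ∈ T
      · have hgS : gt y ∈ S := hy.2
        rw [hh'_in y hy, hh_in _ hgS, hgt_eq y hy.1]
        exact hfg ⟨y, hy.1⟩
      · have huS : (↑(u y) : X) ∉ S := fun hc => hy (hu_mem y hc)
        rw [hh'_out y hy, hh_out _ huS, hvt_eq _ (u y).2]
        exact hvu y
end

section
/- Assume Σ¹₁-determinacy, so that for each countable ordinal α and each condition p in the Steel forcing poset P_α there is a P_α-generic filter over L(r) containing p. Suppose β < γ < ω₁ with β a limit ordinal, and suppose Q ⊆ 2^{(ω^{<ω})} separates P_β-generics from P_γ-generics over L(r) (t(g) ∈ Q for every P_β-generic g, and t(g) ∉ Q for every P_γ-generic g). Assume the Retagging Lemma: for β < γ and tree-formulas φ of rank < β, p ⊩_γ φ iff p^β ⊩_β φ, for all p ∈ P_γ. Assume also the forcing-truth correspondence: for a generic g, t(g) ∈ Q_φ iff some p ∈ g forces φ. Then Q is not Π⁰_{β+1}. -/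
/-- A tagged finite tree: a finite set of finite sequences together with a tagging
function into `Ordinal ∪ {∞}` (where `⊤ = ∞`); off the tree the tag is `⊤`. -/
structure TaggedTree where
  tree : Finset (List ℕ)
  tag : List ℕ → WithTop Ordinal.{0}

/-- `p` is a condition of Steel's forcing poset `P_α`. -/
def IsSteelCond (α : Ordinal) (p : TaggedTree) : Prop :=
  (∀ σ ∈ p.tree, ∀ τ : List ℕ, τ <+: σ → τ ∈ p.tree) ∧
  (∀ σ ∈ p.tree, p.tag σ = ⊤ ∨ p.tag σ < (Ordinal.omega0 * α : Ordinal)) ∧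
  (p.tag [] = ⊤) ∧
  (∀ σ ∉ p.tree, p.tag σ = ⊤) ∧
  (∀ σ ∈ p.tree, ∀ τ ∈ p.tree, σ <+: τ → σ ≠ τ →
    (p.tag τ < p.tag σ ∨ (p.tag σ = ⊤ ∧ p.tag τ = ⊤)))

/-- The order on Steel conditions. -/
def SteelLe (p q : TaggedTree) : Prop :=
  q.tree ⊆ p.tree ∧ ∀ σ ∈ q.tree, p.tag σ = q.tag σ

/-- The retagging of a condition into level `β`: tags `< ω·β` are kept, tags `≥ ω·β`
are replaced by `∞`. -/
noncomputable def retag (β : Ordinal) (p : TaggedTree) : TaggedTree :=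
  ⟨p.tree, fun σ => if p.tag σ < (Ordinal.omega0 * β : Ordinal) then p.tag σ else ⊤⟩

/-- Steel's forcing relation `p ⊩_α φ`. -/
def Forces (α : Ordinal) : TaggedTree → TreeFormula → Prop
  | p, .atom σ => σ ∈ p.tree ∨
      ∃ τ ∈ p.tree, (∃ n : ℕ, σ = τ ++ [n]) ∧ p.tag τ ≠ (0 : WithTop Ordinal)
  | p, .neg φ => ∀ q : TaggedTree, IsSteelCond α q → SteelLe q p → ¬ Forces α q φ
  | p, .conj φs => ∀ n : ℕ, Forces α p (φs n)

open Classical in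
/-- The tree coded by a generic filter `g`, with the tags removed, regarded as an element
of `2^{(ω^{<ω})}`. -/
noncomputable def tg (g : Set TaggedTree) : List ℕ → Bool :=
  fun σ => if ∃ p ∈ g, σ ∈ p.tree then true else false

namespace SteelAux
open Ordinal

lemma lim_add_nat {l x : Ordinal} (hl : Order.IsSuccLimit l) (h : x < l) (k : ℕ) : x + k < l := by
  induction k with
  | zero => simpa
  | succ k ih =>
    have h2 := hl.succ_lt ih
    rwa [← add_one_eq_succ, add_assoc, ← Nat.cast_succ] at h2

lemma two_mul_lt {β ξ : Ordinal} (hβ : Order.IsSuccLimit β) (hξ : ξ < β) : 2*ξ + 9 < β := by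
  obtain ⟨-, b, rfl⟩ := isSuccLimit_iff_omega0_dvd.1 hβ
  set a := ξ / ω with ha
  have h1 : ξ < ω * (a + 1) := by
    have := lt_mul_succ_div ξ omega0_ne_zero
    rwa [← add_one_eq_succ] at this
  have hab : a < b := by
    by_contra hba
    push_neg at hba
    exact absurd ((mul_le_mul_right hba ω).trans (mul_div_le ξ ω)) (not_le.2 hξ)
  have hlim : Order.IsSuccLimit (ω * (a+1)) := by
    rw [mul_add, mul_one]
    exact isSuccLimit_add _ isSuccLimit_omega0
  have h5 : ξ + 5 < ω * (a + 1) := by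
    have := lim_add_nat hlim h1 5
    simpa using this
  have h2ω : (2:Ordinal) * ω = ω :=
    mul_omega0 (by norm_cast) (by exact_mod_cast nat_lt_omega0 2)
  calc 2*ξ + 9 < 2*ξ + 10 := by
        apply add_lt_add_right; norm_cast
    _ = 2*(ξ+5) := by rw [mul_add]; norm_cast
    _ ≤ 2*(ω*(a+1)) := mul_le_mul_right h5.le _
    _ = (2*ω)*(a+1) := (mul_assoc _ _ _).symm
    _ = ω*(a+1) := by rw [h2ω]
    _ ≤ ω*b := mul_le_mul_right (Order.add_one_le_of_lt hab) _

noncomputable def falseF : TreeFormula :=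
  .conj (fun n => if n = 0 then .atom [] else .neg (.atom []))

noncomputable def trueF : TreeFormula := .neg falseF

noncomputable def lit (p : List ℕ × Bool) : TreeFormula :=
  if p.2 then .atom p.1 else .neg (.atom p.1)

noncomputable def cylF (l : List (List ℕ × Bool)) : TreeFormula :=
  .conj (fun n => if h : n < l.length then lit l[n] else trueF)

def Cyl (l : List (List ℕ × Bool)) : Set (List ℕ → Bool) :=
  {T | ∀ p ∈ l, T p.1 = p.2}

lemma Q_falseF : falseF.Q = ∅ := by
  ext T
  simp only [falseF, TreeFormula.Q, Set.mem_iInter, Set.mem_empty_iff_false, iff_false]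
  intro h
  have h0 := h 0
  have h1 := h 1
  simp [TreeFormula.Q] at h0 h1
  rw [h0] at h1
  exact absurd h1 (by simp)

lemma Q_trueF : trueF.Q = Set.univ := by
  have : trueF.Q = (falseF.Q)ᶜ := rfl
  rw [this, Q_falseF, Set.compl_empty]

lemma Q_lit (p : List ℕ × Bool) : (lit p).Q = {T | T p.1 = p.2} := by
  rcases p with ⟨σ, b⟩
  cases b <;> simp [lit, TreeFormula.Q] <;> ext T <;> simp

lemma Q_cylF (l : List (List ℕ × Bool)) : (cylF l).Q = Cyl l := by
  ext T
  simp only [cylF, TreeFormula.Q, Set.mem_iInter, Cyl, Set.mem_setOf_eq]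
  constructor
  · intro h p hp
    obtain ⟨i, hi, rfl⟩ := List.mem_iff_getElem.1 hp
    have := h i
    rw [dif_pos hi, Q_lit] at this
    exact this
  · intro h n
    by_cases hn : n < l.length
    · rw [dif_pos hn, Q_lit]
      exact h _ (List.getElem_mem hn)
    · rw [dif_neg hn, Q_trueF]; trivial

lemma rank_falseF : falseF.rank ≤ 3 := by
  rw [falseF, TreeFormula.rank]
  apply Ordinal.iSup_le
  intro n
  by_cases h : n = 0 <;> simp [h, TreeFormula.rank] <;> norm_cast

lemma rank_trueF : trueF.rank ≤ 4 := by
  rw [trueF, TreeFormula.rank]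
  calc falseF.rank + 1 ≤ 3 + 1 := add_le_add_left rank_falseF _
  _ ≤ 4 := by norm_cast

lemma rank_lit (p : List ℕ × Bool) : (lit p).rank ≤ 2 := by
  rcases p with ⟨σ, b⟩
  cases b <;> simp [lit, TreeFormula.rank] <;> norm_cast

lemma rank_cylF (l : List (List ℕ × Bool)) : (cylF l).rank ≤ 5 := by
  rw [cylF, TreeFormula.rank]
  apply Ordinal.iSup_le
  intro n
  by_cases h : n < l.length
  · rw [dif_pos h]
    calc (lit l[n]).rank + 1 ≤ 2 + 1 := add_le_add_left (rank_lit _) _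
    _ ≤ 5 := by norm_cast
  · rw [dif_neg h]
    calc trueF.rank + 1 ≤ 4 + 1 := add_le_add_left rank_trueF _
    _ ≤ 5 := by norm_cast

open Classical in
lemma open_rep {A : Set (List ℕ → Bool)} (hA : IsOpen A) :
    ∃ χ : ℕ → TreeFormula, (∀ n, (χ n).rank ≤ 5) ∧ A = ⋃ n, (χ n).Q := by
  classical
  refine ⟨fun n => match (Encodable.decode (α := List (List ℕ × Bool)) n) with
    | some l => if Cyl l ⊆ A then cylF l else falseF
    | none => falseF, ?_, ?_⟩
  · intro n
    rcases hd : (Encodable.decode (α := List (List ℕ × Bool)) n) with _ | l <;> simp [hd]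
    · exact rank_falseF.trans (by norm_cast)
    · split
      · exact rank_cylF l
      · exact rank_falseF.trans (by norm_cast)
  · ext T
    constructor
    · intro hT
      obtain ⟨I, u, hu, hsub⟩ := isOpen_pi_iff.1 hA T hT
      set l : List (List ℕ × Bool) := I.toList.map (fun σ => (σ, T σ)) with hl
      have hCsub : Cyl l ⊆ A := by
        intro T' hT'
        apply hsub
        intro σ hσ
        have hmem : (σ, T σ) ∈ l := List.mem_map_of_mem (Finset.mem_toList.2 hσ)
        have := hT' _ hmem
        rw [this]
        exact (hu σ hσ).2
      refine Set.mem_iUnion.2 ⟨Encodable.encode l, ?_⟩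
      simp only [Encodable.encodek]
      rw [if_pos hCsub, Q_cylF]
      intro p hp
      obtain ⟨σ, hσ, rfl⟩ := List.mem_map.1 hp
      rfl
    · intro hT
      obtain ⟨n, hn⟩ := Set.mem_iUnion.1 hT
      revert hn
      rcases hd : (Encodable.decode (α := List (List ℕ × Bool)) n) with _ | l <;> simp [hd]
      · rw [Q_falseF]; exact fun h => h.elim
      · split
        · rename_i h
          rw [Q_cylF]; exact fun hm => h hm
        · rw [Q_falseF]; exact fun h => h.elim

lemma rep {ξ : Ordinal} {A : Set (List ℕ → Bool)} (h : SigmaO (List ℕ → Bool) ξ A) :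
    ∃ φ : TreeFormula, φ.Q = A ∧ φ.rank ≤ 2*ξ + 8 := by
  induction h with
  | @of_isOpen ζ s hs hξ =>
    obtain ⟨χ, hr, rfl⟩ := open_rep hs
    refine ⟨.neg (.conj fun n => .neg (χ n)), ?_, ?_⟩
    · simp only [TreeFormula.Q]
      rw [← Set.compl_iUnion, compl_compl]
    · simp only [TreeFormula.rank]
      have h7 : (⨆ n, (((χ n).rank + 1) + 1)) ≤ 7 := Ordinal.iSup_le fun n => by
        calc ((χ n).rank + 1) + 1 ≤ (5+1)+1 :=
              add_le_add_left (add_le_add_left (hr n) _) _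
          _ ≤ 7 := by norm_num
      calc (⨆ n, ((χ n).rank + 1 + 1)) + 1 ≤ 7 + 1 := add_le_add_left h7 _
        _ ≤ 8 := by norm_num
        _ ≤ 2*ζ + 8 := le_add_self
  | @iUnion ζ s η hη h IH =>
    choose ψ hQ hr using IH
    refine ⟨.neg (.conj ψ), ?_, ?_⟩
    · simp only [TreeFormula.Q]
      rw [Set.iInter_congr hQ, ← Set.compl_iUnion, compl_compl]
    · simp only [TreeFormula.rank]
      have hsup : ∀ n, (ψ n).rank + 1 ≤ 2*ζ + 7 := fun n => by
        calc (ψ n).rank + 1 ≤ (2*(η n)+8)+1 := add_le_add_left (hr n) _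
          _ = 2*(η n)+9 := by rw [add_assoc]; norm_num
          _ = 2*(η n + 1) + 7 := by rw [mul_add, mul_one, add_assoc]; norm_num
          _ ≤ 2*ζ + 7 := add_le_add_left (mul_le_mul_right (Order.add_one_le_of_lt (hη n)) _) _
      calc (⨆ n, ((ψ n).rank + 1)) + 1 ≤ (2*ζ+7)+1 := add_le_add_left (Ordinal.iSup_le hsup) _
        _ = 2*ζ+8 := by rw [add_assoc]; norm_num

lemma pi_rep {β ξ : Ordinal} (hβ : Order.IsSuccLimit β) {X : Set (List ℕ → Bool)}
    (h : SigmaO (List ℕ → Bool) ξ X) (hξ : ξ ≤ β) :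
    ∃ ψ : ℕ → TreeFormula, (∀ m, (ψ m).rank < β) ∧ Xᶜ = ⋂ m, (ψ m).Q := by
  cases h with
  | of_isOpen s hs _ =>
    obtain ⟨χ, hr, rfl⟩ := open_rep hs
    refine ⟨fun m => .neg (χ m), fun m => ?_, ?_⟩
    · simp only [TreeFormula.rank]
      calc (χ m).rank + 1 ≤ 5 + 1 := add_le_add_left (hr m) _
        _ ≤ 6 := by norm_num
        _ < ω := by exact_mod_cast nat_lt_omega0 6
        _ ≤ β := omega0_le_of_isSuccLimit hβ
    · rw [Set.compl_iUnion]
      exact Set.iInter_congr fun m => rfl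
  | iUnion s η hη h =>
    choose φ hQ hr using fun n => rep (h n)
    refine ⟨φ, fun m => ?_, ?_⟩
    · calc (φ m).rank ≤ 2*(η m) + 8 := hr m
        _ < 2*(η m) + 9 := by apply add_lt_add_right; norm_cast
        _ < β := two_mul_lt hβ (lt_of_lt_of_le (hη m) hξ)
    · rw [Set.compl_iUnion]
      exact Set.iInter_congr fun m => (hQ m).symm

lemma retag_cond {γ β : Ordinal} {p : TaggedTree} (h : IsSteelCond γ p) :
    IsSteelCond β (retag β p) := by
  obtain ⟨h1, h2, h3, h4, h5⟩ := h
  have hdef : ∀ σ, (retag β p).tag σ =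
      if p.tag σ < ((Ordinal.omega0 * β : Ordinal) : WithTop Ordinal) then p.tag σ else ⊤ :=
    fun _ => rfl
  refine ⟨h1, ?_, ?_, ?_, ?_⟩
  · intro σ hσ
    rw [hdef]
    split
    · right; assumption
    · left; rfl
  · rw [hdef, h3, if_neg (by simp)]
  · intro σ hσ
    rw [hdef, h4 σ hσ, if_neg (by simp)]
  · intro σ hσ τ hτ hpre hne
    rw [hdef, hdef]
    rcases h5 σ hσ τ hτ hpre hne with hlt | ⟨hσt, hτt⟩
    · by_cases hσβ : p.tag σ < ((Ordinal.omega0 * β : Ordinal) : WithTop Ordinal)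
      · rw [if_pos hσβ, if_pos (hlt.trans hσβ)]
        exact Or.inl hlt
      · rw [if_neg hσβ]
        by_cases hτβ : p.tag τ < ((Ordinal.omega0 * β : Ordinal) : WithTop Ordinal)
        · rw [if_pos hτβ]
          exact Or.inl (hτβ.trans_le le_top)
        · rw [if_neg hτβ]
          exact Or.inr ⟨rfl, rfl⟩
    · rw [hσt, hτt]
      simp

end SteelAux

/-- **A set separating Steel generics of a limit level `β` from generics of a higher
level `γ` is not `Π⁰_{β+1}`.** The family `gen α` of `P_α`-generic filters over `L(r)` is
abstracted by its properties: its members are filters of `P_α`-conditions; every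
condition is contained in some generic filter (this uses `Σ¹₁`-determinacy); and the
forcing-truth correspondence holds. The Retagging Lemma is also assumed. -/
theorem separating_set_not_pi
    (gen : Ordinal → Set (Set TaggedTree))
    -- members of `gen α` are filters of `P_α`-conditions
    (hgencond : ∀ α : Ordinal, ∀ g ∈ gen α, ∀ p ∈ g, IsSteelCond α p)
    (hgenfilter : ∀ α : Ordinal, ∀ g ∈ gen α,
      (∀ p ∈ g, ∀ q ∈ g, ∃ r ∈ g, SteelLe r p ∧ SteelLe r q) ∧
      (∀ p ∈ g, ∀ q : TaggedTree, IsSteelCond α q → SteelLe p q → q ∈ g))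
    -- existence of generics (from `Σ¹₁`-determinacy)
    (hgenex : ∀ α : Ordinal, α.card ≤ Cardinal.aleph0 →
      ∀ p : TaggedTree, IsSteelCond α p → ∃ g ∈ gen α, p ∈ g)
    -- forcing-truth correspondence
    (htruth : ∀ α : Ordinal, ∀ g ∈ gen α, ∀ φ : TreeFormula,
      (tg g ∈ φ.Q ↔ ∃ p ∈ g, Forces α p φ))
    (β γ : Ordinal) (hβγ : β < γ) (hγc : γ.card ≤ Cardinal.aleph0)
    (hβlim : Order.IsSuccLimit β)
    -- the Retagging Lemma
    (hretag : ∀ φ : TreeFormula, φ.rank < β → ∀ p : TaggedTree, IsSteelCond γ p →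
      (Forces γ p φ ↔ Forces β (retag β p) φ))
    (Q : Set (List ℕ → Bool))
    -- `Q` separates `P_β`-generics from `P_γ`-generics
    (hsepβ : ∀ g ∈ gen β, tg g ∈ Q)
    (hsepγ : ∀ g ∈ gen γ, tg g ∉ Q) :
    ¬ SigmaO (List ℕ → Bool) (β + 1) Qᶜ := by
  intro hQ
  obtain ⟨s, hU, hrep⟩ : ∃ s : ℕ → Set (List ℕ → Bool), Qᶜ = ⋃ n, s n ∧
      ∀ n, ∃ ψ : ℕ → TreeFormula, (∀ m, (ψ m).rank < β) ∧ s n = ⋂ m, (ψ m).Q := by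
    clear hsepβ hsepγ
    revert hQ
    generalize Qᶜ = A
    intro hQ
    cases hQ with
    | of_isOpen _ hs _ =>
      obtain ⟨χ, hr, hA⟩ := SteelAux.open_rep hs
      refine ⟨fun n => (χ n).Q, hA, fun n =>
        ⟨fun _ => χ n, fun m => ?_, (Set.iInter_const _).symm⟩⟩
      calc (χ n).rank ≤ 5 := hr n
        _ < Ordinal.omega0 := by exact_mod_cast Ordinal.nat_lt_omega0 5
        _ ≤ β := Ordinal.omega0_le_of_isSuccLimit hβlim
    | iUnion s η hη h =>
      refine ⟨s, rfl, fun n => ?_⟩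
      have hηβ : η n ≤ β := by
        have := hη n
        rwa [Ordinal.add_one_eq_succ, Order.lt_succ_iff] at this
      obtain ⟨ψ, hr, hX⟩ := SteelAux.pi_rep hβlim (h n) hηβ
      refine ⟨ψ, hr, ?_⟩
      rw [← hX, compl_compl]
  -- take a γ-generic through the trivial condition
  have hp₀ : IsSteelCond γ ⟨∅, fun _ => ⊤⟩ := by
    refine ⟨?_, ?_, rfl, fun _ _ => rfl, ?_⟩ <;> intro σ hσ <;> simp at hσ
  obtain ⟨gγ, hgγ, -⟩ := hgenex γ hγc _ hp₀
  have hQc : tg gγ ∈ Qᶜ := hsepγ gγ hgγ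
  rw [hU] at hQc
  obtain ⟨n, hn⟩ := Set.mem_iUnion.1 hQc
  obtain ⟨ψ, hrψ, hsn⟩ := hrep n
  have hconj : tg gγ ∈ (TreeFormula.conj ψ).Q := by
    have : (TreeFormula.conj ψ).Q = ⋂ m, (ψ m).Q := rfl
    rw [this, ← hsn]
    exact hn
  obtain ⟨p, hpg, hF⟩ := (htruth γ gγ hgγ _).1 hconj
  have hpcond := hgencond γ gγ hgγ p hpg
  have hFm : ∀ m, Forces γ p (ψ m) := hF
  have hrcond : IsSteelCond β (retag β p) := SteelAux.retag_cond hpcond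
  have hcard : β.card ≤ Cardinal.aleph0 := (Ordinal.card_le_card hβγ.le).trans hγc
  obtain ⟨gβ, hgβ, hpin⟩ := hgenex β hcard _ hrcond
  have hQβ := hsepβ gβ hgβ
  have hmem : tg gβ ∈ Qᶜ := by
    rw [hU]
    refine Set.mem_iUnion.2 ⟨n, ?_⟩
    rw [hsn]
    refine Set.mem_iInter.2 fun m => ?_
    exact (htruth β gβ hgβ (ψ m)).2
      ⟨_, hpin, (hretag (ψ m) (hrψ m) p hpcond).1 (hFm m)⟩
  exact hmem hQβ
end
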